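/- arXiv:1511.09091 — 10 statements merged into one kernel-verified Lean document; each statement's English description precedes it below -/
import Mathlib

section
/- For every (x,y) ∈ ℤ², neither coordinate of T(x,y) is an integer; equivalently, no point of the graph grid lies on the boundary of an integer unit square. (Indeed the first coordinate of T(x,y) is an odd integer divided by 2q and the second is an odd integer divided by 2q(p+q).) -/
/-- The linear part of the canonical affine transformation, with parameter `A`. -/
noncomputable def dT (A : ℝ) (v : ℝ × ℝ) : ℝ × ℝ :=
  (((A ^ 2 + A) * v.1 + (A + 1) * v.2) / (A + 1),
   ((-A ^ 2 + 2 * A + 1) * v.1 + (-2 * A) * v.2) / (A + 1))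

/-- The canonical affine transformation `T` for the parameter `p/q`,
with `τ` the inverse of `2p` mod `p+q`. -/
noncomputable def Tc (p q τ : ℤ) (v : ℝ × ℝ) : ℝ × ℝ :=
  dT ((p : ℝ) / (q : ℝ)) v +
    (1 / (2 * (q : ℝ)), -1 / (2 * (q : ℝ)) + 1 / ((p : ℝ) + (q : ℝ)) + (τ : ℝ))

/-- for every `(x,y) ∈ ℤ²`, neither coordinate of `T(x,y)` is an integer. -/
theorem stmt0 (p q : ℤ) (hp : 0 < p) (hpq : p < q) (hcop : IsCoprime p q)
    (he : Even (p * q)) (τ : ℤ) (hτ0 : 0 < τ) (hτω : τ < p + q)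
    (hτ : (p + q) ∣ (2 * p * τ - 1)) :
    ∀ m n : ℤ,
      (∀ k : ℤ, (Tc p q τ ((m : ℝ), (n : ℝ))).1 ≠ (k : ℝ)) ∧
      (∀ k : ℤ, (Tc p q τ ((m : ℝ), (n : ℝ))).2 ≠ (k : ℝ)) := by
  have hq0 : (0:ℤ) < q := lt_trans hp hpq
  have hqR : ((q:ℝ)) ≠ 0 := by positivity
  have hpqR : ((p:ℝ) + (q:ℝ)) ≠ 0 := by positivity
  have hA1 : (p:ℝ)/(q:ℝ) + 1 ≠ 0 := by
    have h : (p:ℝ)/(q:ℝ) + 1 = ((p:ℝ) + q)/q := by field_simp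
    rw [h]
    positivity
  -- p + q is odd
  have hodd : Odd (p + q) := by
    have h2 : ¬ (2:ℤ) ∣ p ∨ ¬ (2:ℤ) ∣ q := by
      by_contra hc
      push_neg at hc
      have := hcop.isUnit_of_dvd' hc.1 hc.2
      rw [Int.isUnit_iff] at this
      omega
    rcases Int.even_mul.mp he with hpe | hqe
    · rcases h2 with h | h
      · exact absurd hpe.two_dvd h
      · rcases hpe with ⟨x, hx⟩
        rcases Int.odd_iff.mpr (by omega : q % 2 = 1) with ⟨y, hy⟩
        exact ⟨x + y, by omega⟩
    · rcases h2 with h | h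
      · rcases hqe with ⟨x, hx⟩
        rcases Int.odd_iff.mpr (by omega : p % 2 = 1) with ⟨y, hy⟩
        exact ⟨x + y, by omega⟩
      · exact absurd hqe.two_dvd h
  obtain ⟨t, ht⟩ := hodd
  intro m n
  have e1 : (Tc p q τ ((m:ℝ), (n:ℝ))).1 = ((2*p*m + 2*q*n + 1 : ℤ) : ℝ) / (2*q) := by
    simp only [Tc, dT, Prod.fst_add]
    push_cast
    field_simp
  have e2 : (Tc p q τ ((m:ℝ), (n:ℝ))).2 =
      ((2*(-p^2 + 2*p*q + q^2)*m - 4*p*q*n - (p+q) + 2*q + 2*q*(p+q)*τ : ℤ) : ℝ)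
        / (2*q*(p+q)) := by
    simp only [Tc, dT, Prod.snd_add]
    push_cast
    field_simp
    ring
  constructor
  · intro k hk
    rw [e1, div_eq_iff (by positivity : (2*(q:ℝ)) ≠ 0)] at hk
    have hZ : (2*p*m + 2*q*n + 1 : ℤ) = k * (2*q) := by exact_mod_cast hk
    have hOdd : Odd (k * (2*q)) := hZ ▸ ⟨p*m + q*n, by ring⟩
    exact (Int.not_odd_iff_even.mpr ⟨k*q, by ring⟩) hOdd
  · intro k hk
    have hd : (2*(q:ℝ)*((p:ℝ)+q)) ≠ 0 := by positivity
    rw [e2, div_eq_iff hd] at hk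
    have hZ : (2*(-p^2 + 2*p*q + q^2)*m - 4*p*q*n - (p+q) + 2*q + 2*q*(p+q)*τ : ℤ)
        = k * (2*q*(p+q)) := by exact_mod_cast hk
    have hOdd : Odd (k * (2*q*(p+q))) := hZ ▸
      ⟨(-p^2 + 2*p*q + q^2)*m - 2*p*q*n - t - 1 + q + q*(p+q)*τ, by rw [ht]; ring⟩
    exact (Int.not_odd_iff_even.mpr ⟨k*(q*(p+q)), by ring⟩) hOdd
end

section
/- For every nonzero w ∈ ℤ², at least one coordinate of dT(w) has absolute value at least 1. Consequently, two distinct points of the graph grid T(ℤ²) never lie in the same open integer unit square (k,k+1)×(l,l+1) with k,l ∈ ℤ. -/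
lemma intkey (p q m n : ℤ) (hp : 0 < p) (hpq : p < q)
    (h1 : |p * m + q * n| < q)
    (h2 : |(p + q) ^ 2 * m - 2 * p * (p * m + q * n)| < q * (p + q)) :
    m = 0 ∧ n = 0 := by
  rw [abs_lt] at h1 h2
  obtain ⟨h1a, h1b⟩ := h1
  obtain ⟨h2a, h2b⟩ := h2
  have hm1 : m ≤ 1 := by nlinarith
  have hm2 : -1 ≤ m := by nlinarith
  interval_cases m
  · exfalso
    have hn1 : n ≤ 0 := by nlinarith
    have hn2 : -1 ≤ n := by nlinarith
    interval_cases n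
    · nlinarith
    · nlinarith
  · refine ⟨rfl, ?_⟩
    have hn1 : n ≤ 0 := by nlinarith
    have hn2 : 0 ≤ n := by nlinarith
    omega
  · exfalso
    have hn1 : n ≤ 1 := by nlinarith
    have hn2 : 0 ≤ n := by nlinarith
    interval_cases n
    · nlinarith
    · nlinarith

lemma coord1 (p q : ℤ) (hp : 0 < p) (hpq : p < q) (m n : ℤ) :
    (dT ((p : ℝ) / q) ((m : ℝ), (n : ℝ))).1 = ((p * m + q * n : ℤ) : ℝ) / q := by
  have hqR : (0 : ℝ) < (q : ℝ) := by exact_mod_cast hp.trans hpq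
  have hq : (q : ℝ) ≠ 0 := hqR.ne'
  have hpqR : (0 : ℝ) < (p : ℝ) + q := by
    have : (0 : ℝ) < (p : ℝ) := by exact_mod_cast hp
    linarith
  have hA1 : (p : ℝ) / q + 1 ≠ 0 := by
    have h : (p : ℝ) / q + 1 = ((p : ℝ) + q) / q := by field_simp
    rw [h]
    exact div_ne_zero hpqR.ne' hq
  simp only [dT]
  rw [div_eq_div_iff hA1 hq]
  push_cast
  field_simp

lemma coord2 (p q : ℤ) (hp : 0 < p) (hpq : p < q) (m n : ℤ) :
    (dT ((p : ℝ) / q) ((m : ℝ), (n : ℝ))).2 =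
      (((p + q) ^ 2 * m - 2 * p * (p * m + q * n) : ℤ) : ℝ) / (q * (p + q)) := by
  have hqR : (0 : ℝ) < (q : ℝ) := by exact_mod_cast hp.trans hpq
  have hq : (q : ℝ) ≠ 0 := hqR.ne'
  have hpqR : (0 : ℝ) < (p : ℝ) + q := by
    have : (0 : ℝ) < (p : ℝ) := by exact_mod_cast hp
    linarith
  have hA1 : (p : ℝ) / q + 1 ≠ 0 := by
    have h : (p : ℝ) / q + 1 = ((p : ℝ) + q) / q := by field_simp
    rw [h]
    exact div_ne_zero hpqR.ne' hq
  have hd : ((q : ℝ) * ((p : ℝ) + q)) ≠ 0 := by positivity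
  simp only [dT]
  rw [div_eq_div_iff hA1 hd]
  push_cast
  field_simp
  ring

lemma dT1_sub (A a b c d : ℝ) :
    (dT A (a - c, b - d)).1 = (dT A (a, b)).1 - (dT A (c, d)).1 := by
  simp only [dT]
  rw [div_sub_div_same]
  congr 1
  ring

lemma dT2_sub (A a b c d : ℝ) :
    (dT A (a - c, b - d)).2 = (dT A (a, b)).2 - (dT A (c, d)).2 := by
  simp only [dT]
  rw [div_sub_div_same]
  congr 1
  ring

/-- for every nonzero `w ∈ ℤ²`, at least one coordinate of `dT(w)` has
absolute value at least `1`; consequently, two distinct points of the graph grid `T(ℤ²)`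
never lie in the same open integer unit square. -/
theorem stmt1 (p q : ℤ) (hp : 0 < p) (hpq : p < q) (hcop : IsCoprime p q)
    (he : Even (p * q)) (τ : ℤ) (hτ0 : 0 < τ) (hτω : τ < p + q)
    (hτ : (p + q) ∣ (2 * p * τ - 1)) :
    (∀ w : ℤ × ℤ, w ≠ (0, 0) →
      1 ≤ |(dT ((p : ℝ) / q) ((w.1 : ℝ), (w.2 : ℝ))).1| ∨
      1 ≤ |(dT ((p : ℝ) / q) ((w.1 : ℝ), (w.2 : ℝ))).2|) ∧
    (∀ m n m' n' : ℤ, ((m, n) : ℤ × ℤ) ≠ (m', n') → ∀ k l : ℤ,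
      ¬(Tc p q τ ((m : ℝ), (n : ℝ)) ∈
          Set.Ioo (k : ℝ) ((k : ℝ) + 1) ×ˢ Set.Ioo (l : ℝ) ((l : ℝ) + 1) ∧
        Tc p q τ ((m' : ℝ), (n' : ℝ)) ∈
          Set.Ioo (k : ℝ) ((k : ℝ) + 1) ×ˢ Set.Ioo (l : ℝ) ((l : ℝ) + 1))) := by
  have hq : (0 : ℝ) < (q : ℝ) := by exact_mod_cast hp.trans hpq
  have hpq' : (0 : ℝ) < (p : ℝ) + q := by
    have : (0 : ℝ) < (p : ℝ) := by exact_mod_cast hp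
    linarith
  have key : ∀ w : ℤ × ℤ, w ≠ (0, 0) →
      1 ≤ |(dT ((p : ℝ) / q) ((w.1 : ℝ), (w.2 : ℝ))).1| ∨
      1 ≤ |(dT ((p : ℝ) / q) ((w.1 : ℝ), (w.2 : ℝ))).2| := by
    intro w hw
    by_contra h
    push_neg at h
    obtain ⟨h1, h2⟩ := h
    rw [coord1 p q hp hpq] at h1
    rw [coord2 p q hp hpq] at h2
    have b1 : |((p * w.1 + q * w.2 : ℤ) : ℝ)| < q := by
      rw [abs_div, abs_of_pos hq] at h1
      exact (div_lt_one hq).mp h1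
    have b2 : |(((p + q) ^ 2 * w.1 - 2 * p * (p * w.1 + q * w.2) : ℤ) : ℝ)| <
        (q : ℝ) * ((p : ℝ) + q) := by
      have hd : (0 : ℝ) < (q : ℝ) * ((p : ℝ) + q) := by positivity
      rw [abs_div, abs_of_pos hd] at h2
      exact (div_lt_one hd).mp h2
    have b1' : |p * w.1 + q * w.2| < q := by exact_mod_cast b1
    have b2' : |(p + q) ^ 2 * w.1 - 2 * p * (p * w.1 + q * w.2)| < q * (p + q) := by
      exact_mod_cast b2
    obtain ⟨hm, hn⟩ := intkey p q w.1 w.2 hp hpq b1' b2'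
    exact hw (Prod.ext hm hn)
  refine ⟨key, ?_⟩
  intro m n m' n' hne k l hmem
  obtain ⟨hA, hB⟩ := hmem
  have hw : ((m - m', n - n') : ℤ × ℤ) ≠ (0, 0) := by
    intro hc
    apply hne
    rw [Prod.mk.injEq] at hc ⊢
    omega
  have e1 : (dT ((p : ℝ) / q) (((m - m' : ℤ) : ℝ), ((n - n' : ℤ) : ℝ))).1 =
      (Tc p q τ ((m : ℝ), (n : ℝ))).1 - (Tc p q τ ((m' : ℝ), (n' : ℝ))).1 := by
    simp only [Tc, Prod.fst_add]
    push_cast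
    rw [dT1_sub]
    ring
  have e2 : (dT ((p : ℝ) / q) (((m - m' : ℤ) : ℝ), ((n - n' : ℤ) : ℝ))).2 =
      (Tc p q τ ((m : ℝ), (n : ℝ))).2 - (Tc p q τ ((m' : ℝ), (n' : ℝ))).2 := by
    simp only [Tc, Prod.snd_add]
    push_cast
    rw [dT2_sub]
    ring
  obtain ⟨⟨hA1, hA2⟩, hA3, hA4⟩ := hA
  obtain ⟨⟨hB1, hB2⟩, hB3, hB4⟩ := hB
  rcases key (m - m', n - n') hw with h | h
  · have hlt : |(dT ((p : ℝ) / q) (((m - m' : ℤ) : ℝ), ((n - n' : ℤ) : ℝ))).1| < 1 := by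
      rw [e1, abs_lt]
      constructor <;> linarith
    have h' : 1 ≤ |(dT ((p : ℝ) / q) (((m - m' : ℤ) : ℝ), ((n - n' : ℤ) : ℝ))).1| := h
    linarith
  · have hlt : |(dT ((p : ℝ) / q) (((m - m' : ℤ) : ℝ), ((n - n' : ℤ) : ℝ))).2| < 1 := by
      rw [e2, abs_lt]
      constructor <;> linarith
    have h' : 1 ≤ |(dT ((p : ℝ) / q) (((m - m' : ℤ) : ℝ), ((n - n' : ℤ) : ℝ))).2| := h
    linarith
end

section
/- For every v ∈ ℝ² there exists w ∈ ℤ² with T(w) ∈ ([0,3]×[0,1]) + v; in particular, every union of three horizontally consecutive integer unit squares contains a point of the graph grid. -/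
set_option maxHeartbeats 800000


/-- for every `v ∈ ℝ²` there is `w ∈ ℤ²` with `T(w) ∈ ([0,3]×[0,1]) + v`;
every union of three horizontally consecutive unit squares meets the graph grid. -/
theorem stmt2 (p q : ℤ) (hp : 0 < p) (hpq : p < q) (hcop : IsCoprime p q)
    (he : Even (p * q)) (τ : ℤ) (hτ0 : 0 < τ) (hτω : τ < p + q)
    (hτ : (p + q) ∣ (2 * p * τ - 1)) :
    ∀ v : ℝ × ℝ, ∃ m n : ℤ,
      (Tc p q τ ((m : ℝ), (n : ℝ))).1 ∈ Set.Icc v.1 (v.1 + 3) ∧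
      (Tc p q τ ((m : ℝ), (n : ℝ))).2 ∈ Set.Icc v.2 (v.2 + 1) := by
  intro v
  have hP : (0:ℝ) < (p:ℝ) := by exact_mod_cast hp
  have hPQ : (p:ℝ) < (q:ℝ) := by exact_mod_cast hpq
  have hQ : (0:ℝ) < (q:ℝ) := lt_trans hP hPQ
  set P : ℝ := (p:ℝ) with hPdef
  set Q : ℝ := (q:ℝ) with hQdef
  have hW : (0:ℝ) < P + Q := by linarith
  set W : ℝ := P + Q with hWdef
  set a : ℝ := v.1 with ha
  set b : ℝ := v.2 with hb
  set C : ℝ := -1/(2*Q) + 1/W + (τ:ℝ) with hC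
  set sg : ℝ := W^2/(2*P*Q) with hsg
  set c0 : ℝ := 1/(2*Q) + (W/(2*P))*(C - b - 1) with hc0
  have hsgpos : 0 < sg := by rw [hsg]; positivity
  set m : ℤ := ⌈(a + 1 - W/(2*P) - c0)/sg⌉ with hm
  set Hm : ℝ := sg * (m:ℝ) + c0 with hHm
  set s : ℝ := max a Hm with hs
  set n : ℤ := ⌈s - ((P*(m:ℝ))/Q + 1/(2*Q))⌉ with hn
  set t : ℝ := (P*(m:ℝ))/Q + (n:ℝ) + 1/(2*Q) with ht
  -- basic nonvanishing facts
  have hQne : Q ≠ 0 := ne_of_gt hQ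
  have hWne : W ≠ 0 := ne_of_gt hW
  have hPne : P ≠ 0 := ne_of_gt hP
  -- component formulas for Tc
  have eq1 : (Tc p q τ ((m:ℝ), (n:ℝ))).1 = t := by
    rw [ht]
    simp only [Tc, dT, Prod.fst_add, ← hPdef, ← hQdef]
    field_simp
  have eq2 : (Tc p q τ ((m:ℝ), (n:ℝ))).2
      = W*(m:ℝ)/Q - (2*P/W)*((P*(m:ℝ))/Q + (n:ℝ)) + C := by
    simp only [Tc, dT, Prod.snd_add, ← hPdef, ← hQdef, hC, ← hWdef]
    field_simp
    ring
  -- the two key algebraic identities for the second coordinate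
  have keyA : (W*(m:ℝ)/Q - (2*P/W)*((P*(m:ℝ))/Q + (n:ℝ)) + C) - b
      = (2*P/W) * ((Hm + W/(2*P)) - t) := by
    rw [hHm, hc0, hsg, ht]
    field_simp
    ring
  have keyB : (b + 1) - (W*(m:ℝ)/Q - (2*P/W)*((P*(m:ℝ))/Q + (n:ℝ)) + C)
      = (2*P/W) * (t - Hm) := by
    rw [hHm, hc0, hsg, ht]
    field_simp
    ring
  -- ceiling facts
  have hceil1 : a + 1 - W/(2*P) - c0 ≤ sg * (m:ℝ) := by
    have h := Int.le_ceil ((a + 1 - W/(2*P) - c0)/sg)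
    rw [← hm, div_le_iff₀ hsgpos] at h
    linarith [h]
  have hceil2 : sg * (m:ℝ) < a + 1 - W/(2*P) - c0 + sg := by
    have h := Int.ceil_lt_add_one ((a + 1 - W/(2*P) - c0)/sg)
    rw [← hm] at h
    have h' : (m:ℝ) - 1 < (a + 1 - W/(2*P) - c0)/sg := by linarith
    rw [lt_div_iff₀ hsgpos] at h'
    nlinarith [h']
  have hceil3 : s - ((P*(m:ℝ))/Q + 1/(2*Q)) ≤ (n:ℝ) := by
    have h := Int.le_ceil (s - ((P*(m:ℝ))/Q + 1/(2*Q)))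
    rw [← hn] at h
    exact h
  have hceil4 : (n:ℝ) < s - ((P*(m:ℝ))/Q + 1/(2*Q)) + 1 := by
    have h := Int.ceil_lt_add_one (s - ((P*(m:ℝ))/Q + 1/(2*Q)))
    rw [← hn] at h
    exact h
  have hstep : sg - W/(2*P) = W/(2*Q) := by
    rw [hsg]; field_simp; ring
  have hWQ : W/(2*Q) < 1 := by
    rw [div_lt_one (by linarith : (0:ℝ) < 2*Q)]
    rw [hWdef]; linarith
  have hWP : 1 < W/(2*P) := by
    rw [lt_div_iff₀ (by linarith : (0:ℝ) < 2*P)]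
    rw [hWdef]; linarith
  have hs_lb_a : a ≤ s := le_max_left _ _
  have hs_lb_H : Hm ≤ s := le_max_right _ _
  have hcase : s = a ∨ s = Hm := by
    rcases max_cases a Hm with ⟨h', _⟩ | ⟨h', _⟩
    · exact Or.inl (by rw [hs, h'])
    · exact Or.inr (by rw [hs, h'])
  have hcoef : (0:ℝ) ≤ 2*P/W := by positivity
  -- now forget the definitions, keep only the equations/inequalities
  clear_value P Q W a b C sg c0 m Hm s n t
  -- derived bounds
  have h1 : a + 1 ≤ Hm + W/(2*P) := by rw [hHm]; linarith
  have h2 : Hm < a + 2 := by rw [hHm]; linarith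
  have ht_lb : s ≤ t := by rw [ht]; linarith
  have ht_ub : t ≤ s + 1 := by rw [ht]; linarith
  have hs_ub : s < a + 2 := by
    rcases hcase with h' | h' <;> rw [h'] <;> linarith
  have htop : t ≤ Hm + W/(2*P) := by
    rcases hcase with h' | h'
    · rw [h'] at ht_ub; linarith
    · rw [h'] at ht_ub; linarith
  refine ⟨m, n, ?_, ?_⟩
  · rw [eq1, Set.mem_Icc]
    constructor
    · linarith
    · linarith
  · rw [eq2, Set.mem_Icc]
    constructor
    · nlinarith [mul_nonneg hcoef (by linarith : (0:ℝ) ≤ (Hm + W/(2*P)) - t)]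
    · nlinarith [mul_nonneg hcoef (by linarith : (0:ℝ) ≤ t - Hm)]
end

section
/- For every v ∈ ℝ² there exists w ∈ ℤ² with T(w) ∈ ([0,1]×[0,2]) + v; in particular, every union of two vertically consecutive integer unit squares contains a point of the graph grid. -/
set_option maxHeartbeats 1000000


/-- for every `v ∈ ℝ²` there is `w ∈ ℤ²` with `T(w) ∈ ([0,1]×[0,2]) + v`;
every union of two vertically consecutive unit squares meets the graph grid. -/
theorem stmt3 (p q : ℤ) (hp : 0 < p) (hpq : p < q) (hcop : IsCoprime p q)
    (he : Even (p * q)) (τ : ℤ) (hτ0 : 0 < τ) (hτω : τ < p + q)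
    (hτ : (p + q) ∣ (2 * p * τ - 1)) :
    ∀ v : ℝ × ℝ, ∃ m n : ℤ,
      (Tc p q τ ((m : ℝ), (n : ℝ))).1 ∈ Set.Icc v.1 (v.1 + 1) ∧
      (Tc p q τ ((m : ℝ), (n : ℝ))).2 ∈ Set.Icc v.2 (v.2 + 2) := by
  intro v
  classical
  have hq0 : (0:ℝ) < q := by exact_mod_cast hp.trans hpq
  have hq : (q:ℝ) ≠ 0 := ne_of_gt hq0
  have hp0 : (0:ℝ) < p := by exact_mod_cast hp
  have hpqR : (p:ℝ) < q := by exact_mod_cast hpq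
  have hA : (p:ℝ)/q + 1 ≠ 0 := by positivity
  have hw0 : (0:ℝ) < (p:ℝ)+q := by positivity
  have hw : (p:ℝ)+q ≠ 0 := ne_of_gt hw0
  have hden0 : (0:ℝ) < q*((p:ℝ)+q) := by positivity
  -- key algebraic formulas for the coordinates of Tc
  have key1 : ∀ m n : ℤ,
      (Tc p q τ ((m : ℝ), (n : ℝ))).1 = ((p:ℝ)*m + q*n + 1/2)/q := by
    intro m n
    simp only [Tc, dT, Prod.fst_add]
    field_simp
  have key2 : ∀ m n : ℤ,
      (Tc p q τ ((m : ℝ), (n : ℝ))).2 =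
        (((p:ℝ)+q)^2*m - 2*p*((p:ℝ)*m + q*n))/(q*((p:ℝ)+q)) +
          (-1/(2*(q:ℝ)) + 1/((p:ℝ)+q) + τ) := by
    intro m n
    simp only [Tc, dT, Prod.snd_add]
    field_simp
    ring
  -- the choice of n for each m, and the resulting s = p*m + q*n
  set a : ℝ := (q:ℝ) * v.1 - 1/2 with ha
  set nf : ℤ → ℤ := fun m => ⌈(a - (p:ℝ)*m)/(q:ℝ)⌉ with hnf
  set sf : ℤ → ℤ := fun m => p*m + q*(nf m) with hsf
  have hs_lb : ∀ m : ℤ, a ≤ (sf m : ℝ) := by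
    intro m
    have h1 : (a - (p:ℝ)*m)/(q:ℝ) ≤ (nf m : ℝ) := Int.le_ceil _
    have h2 : (a - (p:ℝ)*m) ≤ (q:ℝ)*(nf m) := by
      rw [div_le_iff₀ hq0] at h1; linarith [h1]
    have : (sf m : ℝ) = (p:ℝ)*m + q*(nf m) := by simp only [hsf]; push_cast; ring
    linarith [this, h2]
  have hs_ub : ∀ m : ℤ, (sf m : ℝ) < a + q := by
    intro m
    have h1 : (nf m : ℝ) < (a - (p:ℝ)*m)/(q:ℝ) + 1 := Int.ceil_lt_add_one _
    have h2 : (q:ℝ)*(nf m) < (a - (p:ℝ)*m) + q := by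
      rw [← sub_lt_iff_lt_add]
      calc (q:ℝ)*(nf m) - q = q * ((nf m : ℝ) - 1) := by ring
        _ < q * ((a - (p:ℝ)*m)/(q:ℝ)) := by
            apply mul_lt_mul_of_pos_left _ hq0; linarith
        _ = a - (p:ℝ)*m := by field_simp
    have : (sf m : ℝ) = (p:ℝ)*m + q*(nf m) := by simp only [hsf]; push_cast; ring
    linarith [this, h2]
  have hs_cast : ∀ m : ℤ, (sf m : ℝ) = (p:ℝ)*m + q*(nf m) := by
    intro m; simp only [hsf]; push_cast; ring
  -- the second coordinate as a function of m
  set f : ℤ → ℝ := fun m =>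
    (((p:ℝ)+q)^2*m - 2*p*(sf m : ℝ))/(q*((p:ℝ)+q)) +
      (-1/(2*(q:ℝ)) + 1/((p:ℝ)+q) + τ) with hf
  have hT2 : ∀ m : ℤ, (Tc p q τ ((m : ℝ), (nf m : ℝ))).2 = f m := by
    intro m
    rw [key2 m (nf m), hf]
    simp only
    rw [hs_cast m]
  -- first coordinate is always in the window
  have hT1 : ∀ m : ℤ, (Tc p q τ ((m : ℝ), (nf m : ℝ))).1 ∈ Set.Icc v.1 (v.1 + 1) := by
    intro m
    rw [key1 m (nf m)]
    have h1 := hs_lb m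
    have h2 := hs_ub m
    rw [← hs_cast m]
    constructor
    · rw [le_div_iff₀ hq0]; rw [ha] at h1; linarith
    · rw [div_le_iff₀ hq0]; rw [ha] at h2; linarith
  -- the step of sf is p or p - q
  have hΔ : ∀ m : ℤ, sf (m+1) - sf m = p ∨ sf (m+1) - sf m = p - q := by
    intro m
    have h1 : ((sf (m+1) : ℝ)) - (sf m : ℝ) < q := by
      have := hs_ub (m+1); have := hs_lb m; linarith
    have h2 : -(q:ℝ) < ((sf (m+1) : ℝ)) - (sf m : ℝ) := by
      have := hs_lb (m+1); have := hs_ub m; linarith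
    have h1' : sf (m+1) - sf m < q := by exact_mod_cast (by push_cast; linarith : ((sf (m+1) - sf m : ℤ) : ℝ) < (q:ℝ))
    have h2' : -q < sf (m+1) - sf m := by exact_mod_cast (by push_cast; linarith : ((-q : ℤ) : ℝ) < ((sf (m+1) - sf m : ℤ) : ℝ))
    have hd : sf (m+1) - sf m = p + q * (nf (m+1) - nf m) := by
      simp only [hsf]; ring
    set d := nf (m+1) - nf m with hdd
    have hd0 : d = 0 ∨ d = -1 := by
      rcases lt_trichotomy d 0 with h | h | h
      · right
        by_contra hne
        have : d ≤ -2 := by omega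
        nlinarith [hd, h1', h2']
      · left; exact h
      · exfalso
        have : 1 ≤ d := h
        nlinarith [hd, h1', h2']
    rcases hd0 with h | h
    · left; rw [hd, h]; ring
    · right; rw [hd, h]; ring
  -- step bounds for f
  have hstep : ∀ m : ℤ, 1 < f (m+1) - f m ∧ f (m+1) - f m < 2 := by
    intro m
    rcases hΔ m with h | h
    · have hc : (sf (m+1) : ℝ) = (sf m : ℝ) + p := by
        have : (sf (m+1) : ℤ) = sf m + p := by omega
        exact_mod_cast congrArg (Int.cast : ℤ → ℝ) this
      have hfe : f (m+1) - f m = (((p:ℝ)+q)^2 - 2*p*p)/(q*((p:ℝ)+q)) := by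
        simp only [hf]
        rw [hc]
        push_cast
        field_simp
        ring
      rw [hfe]
      constructor
      · rw [lt_div_iff₀ hden0]; nlinarith
      · rw [div_lt_iff₀ hden0]; nlinarith
    · have hc : (sf (m+1) : ℝ) = (sf m : ℝ) + p - q := by
        have : (sf (m+1) : ℤ) = sf m + p - q := by omega
        have := congrArg (Int.cast : ℤ → ℝ) this
        push_cast at this; linarith
      have hfe : f (m+1) - f m = (((p:ℝ)+q)^2 - 2*p*((p:ℝ)-q))/(q*((p:ℝ)+q)) := by
        simp only [hf]
        rw [hc]
        push_cast
        field_simp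
        ring
      rw [hfe]
      constructor
      · rw [lt_div_iff₀ hden0]; nlinarith
      · rw [div_lt_iff₀ hden0]; nlinarith [sq_nonneg ((q:ℝ) - p)]
  -- growth: f (m + k) ≥ f m + k
  have hup : ∀ m : ℤ, ∀ k : ℕ, f m + k ≤ f (m + k) := by
    intro m k
    induction k with
    | zero => simp
    | succ k ih =>
        have h1 := (hstep (m + k)).1
        have : (m : ℤ) + (k+1 : ℕ) = (m + k) + 1 := by push_cast; ring
        rw [this]
        push_cast
        push_cast at ih
        linarith
  -- the set of m with f m ≥ v.2 is nonempty and bounded below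
  have hinh : ∃ z : ℤ, v.2 ≤ f z := by
    refine ⟨max 0 ⌈v.2 - f 0⌉, ?_⟩
    set m1 : ℤ := max 0 ⌈v.2 - f 0⌉ with hm1
    have hm1nn : 0 ≤ m1 := le_max_left _ _
    have hcast : ((m1.toNat : ℤ) : ℤ) = m1 := Int.toNat_of_nonneg hm1nn
    have h1 := hup 0 m1.toNat
    rw [zero_add] at h1
    have h2 : (m1.toNat : ℝ) = (m1 : ℝ) := by exact_mod_cast congrArg (Int.cast : ℤ → ℝ) hcast
    rw [h2, hcast] at h1
    have h3 : v.2 - f 0 ≤ (⌈v.2 - f 0⌉ : ℝ) := Int.le_ceil _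
    have h4 : (⌈v.2 - f 0⌉ : ℝ) ≤ (m1 : ℝ) := by
      exact_mod_cast le_max_right 0 ⌈v.2 - f 0⌉
    linarith
  have hbdd : ∃ b : ℤ, ∀ z : ℤ, v.2 ≤ f z → b ≤ z := by
    refine ⟨min 0 ⌈v.2 - f 0⌉, ?_⟩
    intro z hz
    rcases le_or_gt 0 z with h | h
    · exact le_trans (min_le_left _ _) h
    · have hz0 : 0 ≤ -z := by omega
      have hcast : (((-z).toNat : ℤ) : ℤ) = -z := Int.toNat_of_nonneg hz0
      have h1 := hup z (-z).toNat
      have h2 : z + ((-z).toNat : ℤ) = 0 := by omega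
      rw [h2] at h1
      have h3 : (((-z).toNat : ℝ)) = -(z : ℝ) := by
        exact_mod_cast congrArg (Int.cast : ℤ → ℝ) hcast
      rw [h3] at h1
      have h4 : v.2 - f 0 ≤ (z : ℝ) := by linarith
      have h5 : ⌈v.2 - f 0⌉ ≤ z := Int.ceil_le.mpr h4
      exact le_trans (min_le_right _ _) h5
  obtain ⟨lb, hlb, hmin⟩ := Int.exists_least_of_bdd hbdd hinh
  -- lb - 1 is not in the set
  have hlb1 : f (lb - 1) < v.2 := by
    by_contra hcon
    push_neg at hcon
    have := hmin _ hcon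
    omega
  have hub2 : f lb < v.2 + 2 := by
    have h1 := (hstep (lb - 1)).2
    have h2 : lb - 1 + 1 = lb := by ring
    rw [h2] at h1
    linarith
  refine ⟨lb, nf lb, hT1 lb, ?_⟩
  rw [hT2 lb]
  exact ⟨hlb, le_of_lt hub2⟩
end

section
/- Let w ∈ ℤ² be nonzero and write (f₁,f₂) = dT(w). If |f₁| < 2 and |f₂| < 1, then w ∈ {(0,1),(0,−1),(1,1),(−1,−1)}; if |f₁| < 1 and |f₂| < 2, then w ∈ {(1,0),(−1,0),(1,−1),(−1,1)}. In particular, two points of the graph grid lying in two integer unit squares sharing an edge always differ by dT(w) for one of the eight shortest nonzero vectors w of ℤ². -/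
set_option maxHeartbeats 2000000 in
/-- for nonzero `w ∈ ℤ²` with `(f₁,f₂) = dT(w)`: if `|f₁| < 2` and `|f₂| < 1`
then `w ∈ {(0,1),(0,−1),(1,1),(−1,−1)}`; if `|f₁| < 1` and `|f₂| < 2` then
`w ∈ {(1,0),(−1,0),(1,−1),(−1,1)}`.  (Hence two graph-grid points in edge-adjacent unit
squares always differ by `dT(w)` for one of the eight shortest nonzero vectors of `ℤ²`.) -/
theorem stmt4 (A : ℝ) (hA : A ∈ Set.Ioo (0 : ℝ) 1) :
    ∀ w : ℤ × ℤ, w ≠ (0, 0) →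
      ((|(dT A ((w.1 : ℝ), (w.2 : ℝ))).1| < 2 ∧ |(dT A ((w.1 : ℝ), (w.2 : ℝ))).2| < 1) →
        w ∈ ({(0, 1), (0, -1), (1, 1), (-1, -1)} : Set (ℤ × ℤ))) ∧
      ((|(dT A ((w.1 : ℝ), (w.2 : ℝ))).1| < 1 ∧ |(dT A ((w.1 : ℝ), (w.2 : ℝ))).2| < 2) →
        w ∈ ({(1, 0), (-1, 0), (1, -1), (-1, 1)} : Set (ℤ × ℤ))) := by
  obtain ⟨hA0, hA1⟩ := hA
  have hp : (0:ℝ) < A + 1 := by linarith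
  have haux : (0:ℝ) < 2*A^2 - A + 1 := by nlinarith [sq_nonneg (2*A-1)]
  rintro ⟨m, n⟩ hw
  simp only [dT] at *
  have key : (A+1)^3 * (m:ℝ) =
      2*A*((A^2+A)*(m:ℝ)+(A+1)*(n:ℝ)) + (A+1)*((-A^2+2*A+1)*(m:ℝ) + -2*A*(n:ℝ)) := by ring
  constructor
  · rintro ⟨h1, h2⟩
    rw [abs_div, abs_of_pos hp, div_lt_iff₀ hp, abs_lt] at h1 h2
    have p1 := mul_lt_mul_of_pos_left h1.2 (by linarith : (0:ℝ) < 2*A)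
    have p1' := mul_lt_mul_of_pos_left h1.1 (by linarith : (0:ℝ) < 2*A)
    have p2 := mul_lt_mul_of_pos_left h2.2 hp
    have p2' := mul_lt_mul_of_pos_left h2.1 hp
    have hm2 : (m:ℝ) < 2 := by nlinarith [key, p1, p2, mul_pos hp haux, pow_pos hp 3]
    have hm2' : -2 < (m:ℝ) := by nlinarith [key, p1', p2', mul_pos hp haux, pow_pos hp 3]
    have hn4 : (n:ℝ) < 4 := by nlinarith [h1.1, h1.2, hm2, hm2', mul_pos hA0 hp]
    have hn4' : -4 < (n:ℝ) := by nlinarith [h1.1, h1.2, hm2, hm2', mul_pos hA0 hp]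
    have hm : m < 2 := by exact_mod_cast hm2
    have hm' : -2 < m := by exact_mod_cast hm2'
    have hn : n < 4 := by exact_mod_cast hn4
    have hn' : -4 < n := by exact_mod_cast hn4'
    interval_cases m <;> interval_cases n <;> (first | exact absurd rfl hw | (simp; done) | (exfalso; (try push_cast at h1 h2); nlinarith [h1.1, h1.2, h2.1, h2.2, sq_nonneg A, mul_pos hA0 hp]))
  · rintro ⟨h1, h2⟩
    rw [abs_div, abs_of_pos hp, div_lt_iff₀ hp, abs_lt] at h1 h2
    have p1 := mul_lt_mul_of_pos_left h1.2 (by linarith : (0:ℝ) < 2*A)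
    have p1' := mul_lt_mul_of_pos_left h1.1 (by linarith : (0:ℝ) < 2*A)
    have p2 := mul_lt_mul_of_pos_left h2.2 hp
    have p2' := mul_lt_mul_of_pos_left h2.1 hp
    have hm2 : (m:ℝ) < 2 := by nlinarith [key, p1, p2, mul_pos (mul_pos hA0 hA0) hp, pow_pos hp 3]
    have hm2' : -2 < (m:ℝ) := by nlinarith [key, p1', p2', mul_pos (mul_pos hA0 hA0) hp, pow_pos hp 3]
    have hn4 : (n:ℝ) < 4 := by nlinarith [h1.1, h1.2, hm2, hm2', mul_pos hA0 hp]
    have hn4' : -4 < (n:ℝ) := by nlinarith [h1.1, h1.2, hm2, hm2', mul_pos hA0 hp]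
    have hm : m < 2 := by exact_mod_cast hm2
    have hm' : -2 < m := by exact_mod_cast hm2'
    have hn : n < 4 := by exact_mod_cast hn4
    have hn' : -4 < n := by exact_mod_cast hn4'
    interval_cases m <;> interval_cases n <;> (first | exact absurd rfl hw | (simp; done) | (exfalso; (try push_cast at h1 h2); nlinarith [h1.1, h1.2, h2.1, h2.2, sq_nonneg A, mul_pos hA0 hp]))
end

section
/- Call a line in ℝ² a distinguished line of type (i,j), for (i,j) ∈ {(1,0),(0,1),(1,1),(−1,1)}, if it equals {T(m,n) + t·dT(i,j) : t ∈ ℝ} for some (m,n) ∈ ℤ². If two distinct distinguished lines of the same type (i,j) both intersect the interior of one common edge of an integer unit square (a segment {k}×[l,l+1] or [k,k+1]×{l} with k,l ∈ ℤ), then (i,j) = (−1,1) and that edge is horizontal. -/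
/-- The distinguished line of type `(i,j)` through the graph grid point `T(m,n)`. -/
noncomputable def distLine (p q τ i j m n : ℤ) : Set (ℝ × ℝ) :=
  {z | ∃ t : ℝ, z = Tc p q τ ((m : ℝ), (n : ℝ)) +
      t • dT ((p : ℝ) / (q : ℝ)) ((i : ℝ), (j : ℝ))}

/-!
Write `A = p/q > 0` and `cross u v = u₁v₂ − u₂v₁`. Since `det dT = −(A+1)`, for points `z, z'` on the
lines of type `(i,j)` through `T(m,n)` and `T(m',n')` we get `cross (dT(i,j)) (z − z') = −(A+1) N`
with `N = i(n−n') − j(m−m') ∈ ℤ`, and `N = 0` makes the lines equal because `(i,j)` is primitive.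
If `z, z'` lie on a common vertical (horizontal) edge, then `z − z' = (0,y)` (`(x,0)`) with
`|y| < 1` (`|x| < 1`), so `(A+1)|N| = |dT(i,j)₁| |y|` (`|dT(i,j)₂| |x|`). That coordinate of
`dT(i,j)` is at most `A+1` in absolute value for every type, respectively every type but `(−1,1)`,
hence `|N| < 1`.
-/

lemma abs_sub_lt_of_mem_Ioo {a b x y : ℝ} (hx : x ∈ Set.Ioo a (a + b))
    (hy : y ∈ Set.Ioo a (a + b)) : |x - y| < b := by
  rw [abs_sub_lt_iff]
  constructor <;> linarith [hx.1, hx.2, hy.1, hy.2]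

def cross (u v : ℝ × ℝ) : ℝ := u.1 * v.2 - u.2 * v.1

lemma cross_sub_of_mem_lines {P P' d z z' : ℝ × ℝ} {t t' : ℝ}
    (hz : z = P + t • d) (hz' : z' = P' + t' • d) : cross d (z - z') = cross d (P - P') := by
  subst hz hz'
  simp only [cross, Prod.fst_sub, Prod.snd_sub, Prod.fst_add, Prod.snd_add, Prod.smul_fst,
    Prod.smul_snd, smul_eq_mul]
  ring

lemma line_eq_of_eq_add_smul {E : Type*} [AddCommGroup E] [Module ℝ E] {P P' d : E} {c : ℝ}
    (h : P = P' + c • d) : {z | ∃ t : ℝ, z = P + t • d} = {z | ∃ t : ℝ, z = P' + t • d} := by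
  ext z
  constructor
  · rintro ⟨t, rfl⟩
    exact ⟨c + t, by rw [h, add_smul, add_assoc]⟩
  · rintro ⟨t, rfl⟩
    exact ⟨t - c, by rw [h, sub_smul]; abel⟩

section dT

variable {A : ℝ}

lemma dT_sub (u v : ℝ × ℝ) : dT A (u - v) = dT A u - dT A v := by
  ext <;> simp only [dT, Prod.fst_sub, Prod.snd_sub] <;> ring

lemma dT_smul (c : ℝ) (v : ℝ × ℝ) : dT A (c • v) = c • dT A v := by
  ext <;> simp only [dT, Prod.smul_fst, Prod.smul_snd, smul_eq_mul] <;> ring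

lemma cross_dT (hA : A + 1 ≠ 0) (u v : ℝ × ℝ) :
    cross (dT A u) (dT A v) = -(A + 1) * cross u v := by
  simp only [cross, dT]
  field_simp
  ring

lemma dT_fst (hA : A + 1 ≠ 0) (v : ℝ × ℝ) : (dT A v).1 = A * v.1 + v.2 := by
  simp only [dT]
  field_simp

lemma abs_dT_fst_le (h0 : 0 ≤ A) {i j : ℤ}
    (hij : ((i, j) : ℤ × ℤ) ∈ ({(1, 0), (0, 1), (1, 1), (-1, 1)} : Set (ℤ × ℤ))) :
    |(dT A ((i : ℝ), (j : ℝ))).1| ≤ A + 1 := by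
  rw [dT_fst (by linarith), abs_le]
  simp only [Set.mem_insert_iff, Set.mem_singleton_iff, Prod.mk.injEq] at hij
  rcases hij with ⟨rfl, rfl⟩ | ⟨rfl, rfl⟩ | ⟨rfl, rfl⟩ | ⟨rfl, rfl⟩ <;>
    push_cast <;> constructor <;> linarith

lemma abs_dT_snd_le (h0 : 0 ≤ A) {i j : ℤ}
    (hij : ((i, j) : ℤ × ℤ) ∈ ({(1, 0), (0, 1), (1, 1)} : Set (ℤ × ℤ))) :
    |(dT A ((i : ℝ), (j : ℝ))).2| ≤ A + 1 := by
  have hA : 0 < A + 1 := by linarith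
  simp only [Set.mem_insert_iff, Set.mem_singleton_iff, Prod.mk.injEq] at hij
  rw [dT, abs_div, abs_of_pos hA, div_le_iff₀ hA, abs_le]
  rcases hij with ⟨rfl, rfl⟩ | ⟨rfl, rfl⟩ | ⟨rfl, rfl⟩ <;>
    push_cast <;> constructor <;> nlinarith

end dT

lemma Tc_sub_Tc (p q τ : ℤ) (u v : ℝ × ℝ) :
    Tc p q τ u - Tc p q τ v = dT ((p : ℝ) / q) (u - v) := by
  rw [Tc, Tc, add_sub_add_right_eq_sub, dT_sub]

lemma isCoprime_of_mem_types {i j : ℤ}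
    (hij : ((i, j) : ℤ × ℤ) ∈ ({(1, 0), (0, 1), (1, 1), (-1, 1)} : Set (ℤ × ℤ))) :
    IsCoprime i j := by
  simp only [Set.mem_insert_iff, Set.mem_singleton_iff, Prod.mk.injEq] at hij
  rcases hij with ⟨rfl, rfl⟩ | ⟨rfl, rfl⟩ | ⟨rfl, rfl⟩ | ⟨rfl, rfl⟩
  · exact isCoprime_one_left
  · exact isCoprime_one_right
  · exact isCoprime_one_left
  · exact isCoprime_one_right

section distLine

variable {p q τ i j m n m' n' : ℤ}

lemma distLine_eq_of_mul_eq (hij : IsCoprime i j) (h : i * (n - n') = j * (m - m')) :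
    distLine p q τ i j m n = distLine p q τ i j m' n' := by
  obtain ⟨a, b, hab⟩ := hij
  set c := a * (m - m') + b * (n - n')
  have hm : m - m' = c * i := by linear_combination -(m - m') * hab - b * h
  have hn : n - n' = c * j := by linear_combination a * h - (n - n') * hab
  refine line_eq_of_eq_add_smul (c := c) ?_
  rw [← sub_eq_iff_eq_add', Tc_sub_Tc, ← dT_smul]
  congr 1
  ext
  · simp only [Prod.fst_sub, Prod.smul_fst, smul_eq_mul]; exact_mod_cast hm
  · simp only [Prod.snd_sub, Prod.smul_snd, smul_eq_mul]; exact_mod_cast hn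

lemma distLine_eq_of_abs_cross_lt {z z' : ℝ × ℝ} (hA : 0 < (p : ℝ) / q + 1)
    (hij : IsCoprime i j) (hz : z ∈ distLine p q τ i j m n) (hz' : z' ∈ distLine p q τ i j m' n')
    (h : |cross (dT ((p : ℝ) / q) ((i : ℝ), (j : ℝ))) (z - z')| < (p : ℝ) / q + 1) :
    distLine p q τ i j m n = distLine p q τ i j m' n' := by
  obtain ⟨t, hz⟩ := hz
  obtain ⟨t', hz'⟩ := hz'
  rw [cross_sub_of_mem_lines hz hz', Tc_sub_Tc, cross_dT hA.ne'] at h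
  have hN : cross ((i : ℝ), (j : ℝ)) (((m : ℝ), (n : ℝ)) - ((m' : ℝ), (n' : ℝ)))
      = ((i * (n - n') - j * (m - m') : ℤ) : ℝ) := by
    simp only [cross, Prod.fst_sub, Prod.snd_sub]
    push_cast
    ring
  rw [hN, abs_mul, abs_neg, abs_of_pos hA, mul_lt_iff_lt_one_right hA, ← Int.cast_abs,
    ← Int.cast_one, Int.cast_lt, Int.abs_lt_one_iff] at h
  exact distLine_eq_of_mul_eq hij (sub_eq_zero.mp h)

lemma distLine_eq_of_vertical_edge {z z' : ℝ × ℝ} (hA : 0 < (p : ℝ) / q + 1)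
    (hij : IsCoprime i j) (hd : |(dT ((p : ℝ) / q) ((i : ℝ), (j : ℝ))).1| ≤ (p : ℝ) / q + 1)
    (hz : z ∈ distLine p q τ i j m n) (hz' : z' ∈ distLine p q τ i j m' n')
    (h1 : z.1 = z'.1) (h2 : |z.2 - z'.2| < 1) :
    distLine p q τ i j m n = distLine p q τ i j m' n' := by
  refine distLine_eq_of_abs_cross_lt hA hij hz hz' ?_
  calc |cross (dT ((p : ℝ) / q) ((i : ℝ), (j : ℝ))) (z - z')|
      = |(dT ((p : ℝ) / q) ((i : ℝ), (j : ℝ))).1| * |z.2 - z'.2| := by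
        simp [cross, h1, abs_mul]
    _ < (p : ℝ) / q + 1 := by nlinarith [abs_nonneg (z.2 - z'.2)]

lemma distLine_eq_of_horizontal_edge {z z' : ℝ × ℝ} (hA : 0 < (p : ℝ) / q + 1)
    (hij : IsCoprime i j) (hd : |(dT ((p : ℝ) / q) ((i : ℝ), (j : ℝ))).2| ≤ (p : ℝ) / q + 1)
    (hz : z ∈ distLine p q τ i j m n) (hz' : z' ∈ distLine p q τ i j m' n')
    (h1 : |z.1 - z'.1| < 1) (h2 : z.2 = z'.2) :
    distLine p q τ i j m n = distLine p q τ i j m' n' := by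
  refine distLine_eq_of_abs_cross_lt hA hij hz hz' ?_
  calc |cross (dT ((p : ℝ) / q) ((i : ℝ), (j : ℝ))) (z - z')|
      = |(dT ((p : ℝ) / q) ((i : ℝ), (j : ℝ))).2| * |z.1 - z'.1| := by
        simp [cross, h2, abs_mul]
    _ < (p : ℝ) / q + 1 := by nlinarith [abs_nonneg (z.1 - z'.1)]

end distLine

theorem stmt5_general (p q : ℤ) (hp : 0 < p) (hpq : p < q) (τ : ℤ) :
    ∀ i j m n m' n' : ℤ,
      ((i, j) : ℤ × ℤ) ∈ ({(1, 0), (0, 1), (1, 1), (-1, 1)} : Set (ℤ × ℤ)) →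
      distLine p q τ i j m n ≠ distLine p q τ i j m' n' →
      ∀ k l : ℤ,
        -- the two lines never both meet the interior of a common vertical edge
        (¬((∃ z ∈ distLine p q τ i j m n,
              z.1 = (k : ℝ) ∧ z.2 ∈ Set.Ioo (l : ℝ) ((l : ℝ) + 1)) ∧
           (∃ z ∈ distLine p q τ i j m' n',
              z.1 = (k : ℝ) ∧ z.2 ∈ Set.Ioo (l : ℝ) ((l : ℝ) + 1)))) ∧
        -- if they both meet the interior of a common horizontal edge, then (i,j) = (−1,1)
        (((∃ z ∈ distLine p q τ i j m n,
              z.2 = (l : ℝ) ∧ z.1 ∈ Set.Ioo (k : ℝ) ((k : ℝ) + 1)) ∧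
          (∃ z ∈ distLine p q τ i j m' n',
              z.2 = (l : ℝ) ∧ z.1 ∈ Set.Ioo (k : ℝ) ((k : ℝ) + 1))) →
          ((i, j) : ℤ × ℤ) = (-1, 1)) := by
  intro i j m n m' n' hij hne k l
  have hA0 : 0 < (p : ℝ) / q := div_pos (by exact_mod_cast hp) (by exact_mod_cast hp.trans hpq)
  have hA : 0 < (p : ℝ) / q + 1 := by linarith
  have hcop := isCoprime_of_mem_types hij
  constructor
  · rintro ⟨⟨z, hz, hzk, hzl⟩, z', hz', hzk', hzl'⟩
    exact hne (distLine_eq_of_vertical_edge hA hcop (abs_dT_fst_le hA0.le hij) hz hz'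
      (hzk.trans hzk'.symm) (abs_sub_lt_of_mem_Ioo hzl hzl'))
  · rintro ⟨⟨z, hz, hzl, hzk⟩, z', hz', hzl', hzk'⟩
    by_contra hnot
    have hij_ne : ((i, j) : ℤ × ℤ) ∈ ({(1, 0), (0, 1), (1, 1)} : Set (ℤ × ℤ)) := by
      simp only [Set.mem_insert_iff, Set.mem_singleton_iff] at hij ⊢
      tauto
    exact hne (distLine_eq_of_horizontal_edge hA hcop (abs_dT_snd_le hA0.le hij_ne) hz hz'
      (abs_sub_lt_of_mem_Ioo hzk hzk') (hzl.trans hzl'.symm))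

/-- if two distinct distinguished lines of the same type `(i,j)` both
intersect the interior of one common edge of an integer unit square, then
`(i,j) = (−1,1)` and that edge is horizontal. -/
theorem stmt5 (p q : ℤ) (hp : 0 < p) (hpq : p < q) (hcop : IsCoprime p q)
    (he : Even (p * q)) (τ : ℤ) (hτ0 : 0 < τ) (hτω : τ < p + q)
    (hτ : (p + q) ∣ (2 * p * τ - 1)) :
    ∀ i j m n m' n' : ℤ,
      ((i, j) : ℤ × ℤ) ∈ ({(1, 0), (0, 1), (1, 1), (-1, 1)} : Set (ℤ × ℤ)) →
      distLine p q τ i j m n ≠ distLine p q τ i j m' n' →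
      ∀ k l : ℤ,
        -- the two lines never both meet the interior of a common vertical edge
        (¬((∃ z ∈ distLine p q τ i j m n,
              z.1 = (k : ℝ) ∧ z.2 ∈ Set.Ioo (l : ℝ) ((l : ℝ) + 1)) ∧
           (∃ z ∈ distLine p q τ i j m' n',
              z.1 = (k : ℝ) ∧ z.2 ∈ Set.Ioo (l : ℝ) ((l : ℝ) + 1)))) ∧
        -- if they both meet the interior of a common horizontal edge, then (i,j) = (−1,1)
        (((∃ z ∈ distLine p q τ i j m n,
              z.2 = (l : ℝ) ∧ z.1 ∈ Set.Ioo (k : ℝ) ((k : ℝ) + 1)) ∧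
          (∃ z ∈ distLine p q τ i j m' n',
              z.2 = (l : ℝ) ∧ z.1 ∈ Set.Ioo (k : ℝ) ((k : ℝ) + 1))) →
          ((i, j) : ℤ × ℤ) = (-1, 1)) :=
  stmt5_general p q hp hpq τ
end

section
/- The anchor point ζ = ((1+A)/2, (1−A)/2) belongs to the graph grid: there exists (m,n) ∈ ℤ² with T(m,n) = ((1+A)/2, (1−A)/2). -/
/-!
Along the line `y = x + τ` both coordinates of `T(x, y) - ζ` are multiples of the single
linear form `2(p+q)x + 2qτ + 1 - (p+q)`, so `ζ = T(m, m + τ)` for the root `m` of that form.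
It is an integer because `2qτ ≡ -1 (mod p+q)`, and the quotient `1 - 2τ + (2pτ - 1)/(p+q)`
is even since `2pτ - 1` is odd.
-/

theorem Tc_add_tau_eq_anchor {p q τ : ℤ} (hq : (q : ℝ) ≠ 0) (hω : (p : ℝ) + q ≠ 0) (x : ℝ)
    (hx : 2 * ((p : ℝ) + q) * x + 2 * q * τ + 1 = p + q) :
    Tc p q τ (x, x + τ) = ((1 + (p : ℝ) / q) / 2, (1 - (p : ℝ) / q) / 2) := by
  have hA : (p : ℝ) / q + 1 ≠ 0 := by
    rw [div_add_one hq]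
    exact div_ne_zero hω hq
  simp only [Tc, dT, Prod.mk_add_mk, Prod.ext_iff]
  constructor
  · field_simp
    linear_combination hx
  · field_simp
    linear_combination ((q : ℝ) - p) * hx

theorem exists_two_mul_add_mul_eq_of_dvd {p q τ : ℤ} (hτ : (p + q) ∣ (2 * p * τ - 1)) :
    ∃ m : ℤ, 2 * (p + q) * m + 2 * q * τ + 1 = p + q := by
  obtain ⟨k, hk⟩ := hτ
  have hk_odd : Odd k := by
    have h : Odd ((p + q) * k) := hk ▸ ⟨p * τ - 1, by ring⟩
    exact (Int.odd_mul.mp h).2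
  obtain ⟨j, rfl⟩ := hk_odd
  exact ⟨j + 1 - τ, by linear_combination -hk⟩

theorem stmt9_general (p q : ℤ) (hp : 0 < p) (hpq : p < q) (τ : ℤ)
    (hτ : (p + q) ∣ (2 * p * τ - 1)) :
    ∃ m n : ℤ,
      Tc p q τ ((m : ℝ), (n : ℝ)) =
        ((1 + (p : ℝ) / q) / 2, (1 - (p : ℝ) / q) / 2) := by
  obtain ⟨m, hm⟩ := exists_two_mul_add_mul_eq_of_dvd hτ
  have hp' : (0 : ℝ) < p := by exact_mod_cast hp
  have hq' : (0 : ℝ) < q := by exact_mod_cast hp.trans hpq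
  refine ⟨m, m + τ, ?_⟩
  push_cast
  exact Tc_add_tau_eq_anchor hq'.ne' (by positivity) m (by exact_mod_cast hm)

/-- the anchor point `ζ = ((1+A)/2, (1−A)/2)` belongs to the graph grid. -/
theorem stmt9 (p q : ℤ) (hp : 0 < p) (hpq : p < q) (hcop : IsCoprime p q)
    (he : Even (p * q)) (τ : ℤ) (hτ0 : 0 < τ) (hτω : τ < p + q)
    (hτ : (p + q) ∣ (2 * p * τ - 1)) :
    ∃ m n : ℤ,
      Tc p q τ ((m : ℝ), (n : ℝ)) =
        ((1 + (p : ℝ) / q) / 2, (1 - (p : ℝ) / q) / 2) :=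
  stmt9_general p q hp hpq τ hτ
end

section
/- The graph grid has rotational symmetry about the origin: for every (m,n) ∈ ℤ² there exists (m',n') ∈ ℤ² with T(m',n') = −T(m,n). -/
theorem Tc_sub (p q τ : ℤ) (w v : ℝ × ℝ) :
    Tc p q τ (w - v) = Tc p q τ w - Tc p q τ v + Tc p q τ 0 := by
  simp only [Tc, dT, Prod.fst_sub, Prod.snd_sub, Prod.fst_zero, Prod.snd_zero, Prod.ext_iff,
    Prod.fst_add, Prod.snd_add]
  constructor <;> ring

theorem Tc_eq_neg_Tc_zero {p q τ k : ℤ} (hq : (q : ℝ) ≠ 0) (hω : (p : ℝ) + q ≠ 0)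
    (hk : 2 * p * τ - 1 = (p + q) * k) :
    Tc p q τ ((k - 2 * τ : ℤ), (k : ℤ)) = -Tc p q τ 0 := by
  have hA : (p : ℝ) / q + 1 ≠ 0 := by
    rwa [div_add_one hq, div_ne_zero_iff, and_iff_left hq]
  have hk' : 2 * (p : ℝ) * τ - 1 = (p + q) * k := by exact_mod_cast hk
  simp only [Tc, dT, Prod.fst_zero, Prod.snd_zero, Prod.neg_mk, Prod.mk_add_mk, Prod.mk.injEq]
  push_cast
  constructor
  · field_simp
    linear_combination (-2) * hk'
  · field_simp
    linear_combination (2 * (p : ℝ) - 2 * q) * hk'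

theorem stmt10_general (p q : ℤ) (hp : 0 < p) (hpq : p < q) (τ : ℤ)
    (hτ : (p + q) ∣ (2 * p * τ - 1)) :
    ∀ m n : ℤ, ∃ m' n' : ℤ,
      Tc p q τ ((m' : ℝ), (n' : ℝ)) = -Tc p q τ ((m : ℝ), (n : ℝ)) := by
  obtain ⟨k, hk⟩ := hτ
  intro m n
  have hq : (q : ℝ) ≠ 0 := by exact_mod_cast (show q ≠ 0 by omega)
  have hω : (p : ℝ) + q ≠ 0 := by exact_mod_cast (show p + q ≠ 0 by omega)
  refine ⟨k - 2 * τ - m, k - n, ?_⟩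
  have hw : (((k - 2 * τ - m : ℤ) : ℝ), ((k - n : ℤ) : ℝ))
      = (((k - 2 * τ : ℤ) : ℝ), ((k : ℤ) : ℝ)) - ((m : ℝ), (n : ℝ)) := by
    push_cast; rfl
  rw [hw, Tc_sub, Tc_eq_neg_Tc_zero hq hω hk]
  abel

/-- the graph grid has rotational symmetry about the origin. -/
theorem stmt10 (p q : ℤ) (hp : 0 < p) (hpq : p < q) (hcop : IsCoprime p q)
    (he : Even (p * q)) (τ : ℤ) (hτ0 : 0 < τ) (hτω : τ < p + q)
    (hτ : (p + q) ∣ (2 * p * τ - 1)) :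
    ∀ m n : ℤ, ∃ m' n' : ℤ,
      Tc p q τ ((m' : ℝ), (n' : ℝ)) = -Tc p q τ ((m : ℝ), (n : ℝ)) :=
  stmt10_general p q hp hpq τ hτ
end

section
/- Graph Reconstruction Formula: for every (m,n) ∈ ℤ², writing (x,y) = T(m,n), one has y − ((1−A)/(1+A))·x ∈ ℤ. (Thus the image of a graph-grid point in ℝ²/ℤ² is recovered from its graph classifying value: [y] = [x(1−A)/(1+A)].) -/
/-- Graph Reconstruction Formula: for every `(m,n) ∈ ℤ²`, writing
`(x,y) = T(m,n)`, one has `y − ((1−A)/(1+A))·x ∈ ℤ`. -/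
theorem stmt11 (p q : ℤ) (hp : 0 < p) (hpq : p < q) (hcop : IsCoprime p q)
    (he : Even (p * q)) (τ : ℤ) (hτ0 : 0 < τ) (hτω : τ < p + q)
    (hτ : (p + q) ∣ (2 * p * τ - 1)) :
    ∀ m n : ℤ, ∃ k : ℤ,
      (Tc p q τ ((m : ℝ), (n : ℝ))).2 -
          ((1 - (p : ℝ) / q) / (1 + (p : ℝ) / q)) * (Tc p q τ ((m : ℝ), (n : ℝ))).1 =
        (k : ℝ) := by
  intro m n
  refine ⟨m - n + τ, ?_⟩
  have hp' : (0:ℝ) < p := by exact_mod_cast hp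
  have hq' : (0:ℝ) < q := lt_trans hp' (by exact_mod_cast hpq)
  have hq0 : (q:ℝ) ≠ 0 := ne_of_gt hq'
  have hpq0 : (p:ℝ) + q ≠ 0 := by positivity
  have hA1 : (p:ℝ) / q + 1 ≠ 0 := by positivity
  simp only [Tc, dT, Prod.fst_add, Prod.snd_add]
  push_cast
  field_simp
  ring
end

section
/- Hitset property on the diagonal (left case): let n ≥ 1 and 1 ≤ k ≤ n be integers and let A ∈ ((2k−1)/(2n+1), 2k/(2n+1)); set P = 2A/(1+A). Then the point ξ = (P(2n+2k+1) − 4k + 1, P(1+k+n) − 2k) satisfies P−1 < P(1+k+n) − 2k < P(2n+2k+1) − 4k + 1 < 1; that is, ξ lies in the triangle Δ_L with vertices (−1+P,−1+P), (1,−1+P), (1,1). -/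
/-- hitset property on the diagonal, left case: for integers `n ≥ 1`,
`1 ≤ k ≤ n` and `A ∈ ((2k−1)/(2n+1), 2k/(2n+1))`, with `P = 2A/(1+A)`, the point
`ξ = (P(2n+2k+1) − 4k + 1, P(1+k+n) − 2k)` satisfies
`P−1 < P(1+k+n) − 2k < P(2n+2k+1) − 4k + 1 < 1`, i.e. `ξ` lies in the triangle `Δ_L`
with vertices `(−1+P,−1+P)`, `(1,−1+P)`, `(1,1)`. -/
theorem stmt19 (n k : ℤ) (hn : 1 ≤ n) (hk1 : 1 ≤ k) (hk2 : k ≤ n) (A : ℝ)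
    (hA : A ∈ Set.Ioo ((2 * (k : ℝ) - 1) / (2 * (n : ℝ) + 1))
      (2 * (k : ℝ) / (2 * (n : ℝ) + 1))) :
    let P : ℝ := 2 * A / (1 + A)
    (P - 1 < P * (1 + (k : ℝ) + n) - 2 * k ∧
     P * (1 + (k : ℝ) + n) - 2 * k < P * (2 * (n : ℝ) + 2 * k + 1) - 4 * k + 1 ∧
     P * (2 * (n : ℝ) + 2 * k + 1) - 4 * k + 1 < 1) ∧
    ((P * (2 * (n : ℝ) + 2 * k + 1) - 4 * k + 1, P * (1 + (k : ℝ) + n) - 2 * k) : ℝ × ℝ) ∈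
      convexHull ℝ {((-1 + P : ℝ), (-1 + P : ℝ)), (1, -1 + P), (1, 1)} := by
  obtain ⟨hAl, hAr⟩ := hA
  intro P
  have hn' : (1 : ℝ) ≤ (n : ℝ) := by exact_mod_cast hn
  have hk1' : (1 : ℝ) ≤ (k : ℝ) := by exact_mod_cast hk1
  have hk2' : (k : ℝ) ≤ (n : ℝ) := by exact_mod_cast hk2
  have hden : (0 : ℝ) < 2 * (n : ℝ) + 1 := by linarith
  have hkey1 : (2 * (k : ℝ) - 1) < A * (2 * (n : ℝ) + 1) := by
    rw [div_lt_iff₀ hden] at hAl; linarith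
  have hkey2 : A * (2 * (n : ℝ) + 1) < 2 * (k : ℝ) := by
    rw [lt_div_iff₀ hden] at hAr; linarith
  have hA0 : 0 < A := by nlinarith
  have hA1 : A < 1 := by nlinarith
  have h1A : (0 : ℝ) < 1 + A := by linarith
  have h1A' : (1 + A : ℝ) ≠ 0 := ne_of_gt h1A
  have hPval : P = 2 * A / (1 + A) := rfl
  -- the three gaps
  have e1 : P * (1 + (k : ℝ) + n) - 2 * k - (P - 1)
      = (A * (2 * (n : ℝ) + 1) - (2 * (k : ℝ) - 1)) / (1 + A) := by
    rw [hPval]; field_simp; ring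
  have e2 : (P * (2 * (n : ℝ) + 2 * k + 1) - 4 * k + 1) - (P * (1 + (k : ℝ) + n) - 2 * k)
      = (A * (2 * (n : ℝ) + 1) - (2 * (k : ℝ) - 1)) / (1 + A) := by
    rw [hPval]; field_simp; ring
  have e3 : 1 - (P * (2 * (n : ℝ) + 2 * k + 1) - 4 * k + 1)
      = 2 * (2 * (k : ℝ) - A * (2 * (n : ℝ) + 1)) / (1 + A) := by
    rw [hPval]; field_simp; ring
  have hpos1 : (0:ℝ) < (A * (2 * (n : ℝ) + 1) - (2 * (k : ℝ) - 1)) / (1 + A) := by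
    apply div_pos (by linarith) h1A
  have hpos3 : (0:ℝ) < 2 * (2 * (k : ℝ) - A * (2 * (n : ℝ) + 1)) / (1 + A) := by
    apply div_pos (by linarith) h1A
  have i1 : P - 1 < P * (1 + (k : ℝ) + n) - 2 * k := by linarith [e1 ▸ hpos1]
  have i2 : P * (1 + (k : ℝ) + n) - 2 * k < P * (2 * (n : ℝ) + 2 * k + 1) - 4 * k + 1 := by
    linarith [e2 ▸ hpos1]
  have i3 : P * (2 * (n : ℝ) + 2 * k + 1) - 4 * k + 1 < 1 := by linarith [e3 ▸ hpos3]
  refine ⟨⟨i1, i2, i3⟩, ?_⟩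
  -- convex hull membership
  set x : ℝ := P * (2 * (n : ℝ) + 2 * k + 1) - 4 * k + 1 with hx
  set y : ℝ := P * (1 + (k : ℝ) + n) - 2 * k with hy
  have hD : (0:ℝ) < 2 - P := by
    have : P < 1 := by
      rw [hPval, div_lt_one h1A]; linarith
    linarith
  have hy' : P - 1 < y := i1
  have hxy : y < x := i2
  have hx1 : x < 1 := i3
  set a : ℝ := (1 - x) / (2 - P) with ha
  set b : ℝ := (x - y) / (2 - P) with hb
  set c : ℝ := (y - (P - 1)) / (2 - P) with hc
  have hDne : (2 - P : ℝ) ≠ 0 := ne_of_gt hD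
  have ha0 : 0 ≤ a := le_of_lt (div_pos (by linarith) hD)
  have hb0 : 0 ≤ b := le_of_lt (div_pos (by linarith) hD)
  have hc0 : 0 ≤ c := le_of_lt (div_pos (by linarith) hD)
  have habc : a + b + c = 1 := by
    rw [ha, hb, hc]; field_simp; ring
  have hcomb : (x, y) = a • ((-1 + P : ℝ), (-1 + P : ℝ)) + b • ((1 : ℝ), (-1 + P : ℝ))
      + c • ((1 : ℝ), (1 : ℝ)) := by
    simp only [Prod.smul_mk, smul_eq_mul, Prod.mk_add_mk]
    refine Prod.ext ?_ ?_
    · show x = a * (-1 + P) + b * 1 + c * 1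
      rw [ha, hb, hc]; field_simp; ring
    · show y = a * (-1 + P) + b * (-1 + P) + c * 1
      rw [ha, hb, hc]; field_simp; ring
  rw [hcomb]
  have hsub := subset_convexHull ℝ ({((-1 + P : ℝ), (-1 + P : ℝ)), (1, -1 + P), (1, 1)} : Set (ℝ × ℝ))
  have hv1 : ((-1 + P : ℝ), (-1 + P : ℝ)) ∈ convexHull ℝ
      ({((-1 + P : ℝ), (-1 + P : ℝ)), (1, -1 + P), (1, 1)} : Set (ℝ × ℝ)) :=
    hsub (by simp)
  have hv2 : ((1 : ℝ), (-1 + P : ℝ)) ∈ convexHull ℝ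
      ({((-1 + P : ℝ), (-1 + P : ℝ)), (1, -1 + P), (1, 1)} : Set (ℝ × ℝ)) :=
    hsub (by simp)
  have hv3 : ((1 : ℝ), (1 : ℝ)) ∈ convexHull ℝ
      ({((-1 + P : ℝ), (-1 + P : ℝ)), (1, -1 + P), (1, 1)} : Set (ℝ × ℝ)) :=
    hsub (by simp)
  have hsum := (convex_convexHull ℝ
      ({((-1 + P : ℝ), (-1 + P : ℝ)), (1, -1 + P), (1, 1)} : Set (ℝ × ℝ))).sum_mem
    (t := (Finset.univ : Finset (Fin 3))) (w := ![a, b, c])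
    (z := ![((-1 + P : ℝ), (-1 + P : ℝ)), ((1 : ℝ), (-1 + P : ℝ)), ((1 : ℝ), (1 : ℝ))])
    (by intro i _; fin_cases i <;> simpa using ‹_›)
    (by simp [Fin.sum_univ_three]; linarith)
    (by
      intro i _
      fin_cases i
      · exact hv1
      · exact hv2
      · exact hv3)
  rw [Fin.sum_univ_three] at hsum
  simpa only [Matrix.cons_val_zero, Matrix.cons_val_one, Matrix.head_cons,
    Matrix.cons_val_two, Matrix.tail_cons] using hsum
end
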